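/- Reorganization of the labelled-tree sum into planar rooted trees: Σ_{n≥1} (1/n!) Σ_{τ ∈ T⁰ₙ} Σ_{(γ₁,...,γₙ)∈Pⁿ} ∏_{{i,j}∈E_τ} F(γᵢ,γⱼ) ρ_{γ₁}···ρ_{γₙ} = Σ_{t ∈ 𝕋⁰, t ≠ root-only} ∏_{v⪰root} (1/s_v!) ∏_{i=1}^{s_v} [Σ_{γ_{vⁱ}∈P} F(γ_v, γ_{vⁱ}) ρ_{γ_{vⁱ}}], as an identity of sums of nonnegative terms (both sides possibly +∞), for any F : P×P → [0,∞], ρ : P → [0,∞), and fixed γ₀ assigned to the root. -/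

import Mathlib

/-
Write `A n γ` (`labelledSum`) for the sum over labelled trees on `{0, …, n}` with the root
labelled `γ`, and `T n γ` (`planarSum`) for the sum of the weights of the planar trees with `n`
non-root vertices. Both satisfy the same recursion, so `A n = n! * T n`; dividing by `n!` and
summing over `n` gives the identity.

Labelled side: cut a tree on `{0, …, n + 1}` along the branch at the root that contains the
vertex `1`. If the branch has vertex set `S` with `j + 1` elements and root `c`, the tree is a
tree on `S` rooted at `c` grafted onto a tree on the complement, and the weight factors
accordingly. Summing over `c ∈ S` and over `S ∋ 1` gives
`A (n + 1) = ∑ j, (n choose j) (j + 1) B j * A (n - j)`, where `B j γ = ∑ γ', F γ γ' ρ γ' A j γ'`.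

Planar side: `n + 1 = ∑ (size s + 1)` over the subtrees `s` at the root. Splitting off one
subtree of a root with `k + 1` children turns `(k + 1) / (k + 1)!` into `1 / k!`, which gives
`(n + 1) T (n + 1) = ∑ j, (j + 1) U j * T (n - j)`, where `U` is built from `T` as `B` from `A`.
-/

open scoped BigOperators ENNReal NNReal
noncomputable section

/-- Planar rooted trees: a root together with an ordered (finite) list of subtrees. -/
inductive PTree where
  | node : List PTree → PTree

/-- The weight of a planar rooted tree pinned at `γ`: each vertex contributes a factor
`1/s_v!` and, for each of its children, a factor `Σ_{γ'} F(γ_v,γ') ρ_{γ'} (…subtree…)`. -/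
def treeW2 {P : Type*} (F : P → P → ℝ≥0∞) (ρ : P → ℝ≥0∞) : PTree → P → ℝ≥0∞
  | .node l, γ => ((l.length.factorial : ℝ≥0∞))⁻¹ *
      ∏ i : Fin l.length, ∑' γ' : P, F γ γ' * ρ γ' * treeW2 F ρ (l.get i) γ'
decreasing_by
  simp_wf; have := List.sizeOf_lt_of_mem (l.getElem_mem i.isLt)
  simp [PTree.node.sizeOf_spec]; omega

open Finset
open scoped Nat

lemma ENNReal.tsum_tsum_ite_add_eq {α β : Type*} (a : α → ℕ) (b : β → ℕ)
    (f : α → ℝ≥0∞) (g : β → ℝ≥0∞) (n : ℕ) :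
    ∑' x, ∑' y, (if a x + b y = n then f x * g y else 0)
      = ∑ i ∈ range (n + 1),
          (∑' x, if a x = i then f x else 0) * ∑' y, if b y = n - i then g y else 0 := by
  simp_rw [← ENNReal.tsum_mul_right, ← ENNReal.tsum_mul_left]
  rw [← Summable.tsum_finsetSum fun _ _ => ENNReal.summable]
  refine tsum_congr fun x => ?_
  rw [← Summable.tsum_finsetSum fun _ _ => ENNReal.summable]
  refine tsum_congr fun y => ?_
  simp_rw [ite_mul, zero_mul, mul_ite, mul_zero]
  rw [Finset.sum_ite_eq]
  by_cases h : a x + b y = n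
  · rw [if_pos h, if_pos (mem_range.2 (by omega)), if_pos (by omega)]
  · rw [if_neg h]
    split_ifs with h1 h2
    · exact absurd (by rw [mem_range] at h1; omega) h
    all_goals rfl

lemma ENNReal.inv_factorial_succ_mul (k : ℕ) :
    ((k + 1)! : ℝ≥0∞)⁻¹ * (k + 1) = (k ! : ℝ≥0∞)⁻¹ := by
  have h0 : ((k + 1 : ℕ) : ℝ≥0∞) ≠ 0 := by positivity
  have htop : ((k + 1 : ℕ) : ℝ≥0∞) ≠ ⊤ := ENNReal.natCast_ne_top _
  rw [Nat.factorial_succ, Nat.cast_mul, ENNReal.mul_inv (Or.inl h0) (Or.inl htop), mul_right_comm,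
    ← Nat.cast_succ, ENNReal.inv_mul_cancel h0 htop, one_mul]

lemma tsum_ite_eq_add_one {α : Type*} [AddCommMonoid α] [TopologicalSpace α] (m : ℕ) (x : α) :
    ∑' k : ℕ, (if m = k + 1 then x else 0) = if m = 0 then 0 else x := by
  rcases m with _ | m
  · simp
  · simp [eq_comm]

lemma Finset.exists_equiv_fin_apply_zero {α : Type*} {T : Finset α} {m : ℕ} (hT : T.card = m + 1)
    {x : α} (hx : x ∈ T) : ∃ e : Fin (m + 1) ≃ T, (e 0 : α) = x := by
  set e₀ := T.equivFinOfCardEq hT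
  exact ⟨(Equiv.swap 0 (e₀ ⟨x, hx⟩)).trans e₀.symm, by simp⟩

lemma sum_card_filter_zero_notMem_one_mem {M : Type*} [AddCommMonoid M] (n : ℕ) (f : ℕ → M) :
    ∑ S ∈ univ.filter (fun S : Finset (Fin (n + 2)) => 0 ∉ S ∧ 1 ∈ S), f S.card
      = ∑ j ∈ range (n + 1), n.choose j • f (j + 1) := by
  set W : Finset (Fin (n + 2)) := (univ.erase 0).erase 1
  have h1W : 1 ∉ W := by simp [W]
  have hW : W.card = n := by simp [W, card_erase_of_mem]
  have hpow := sum_powerset_apply_card (fun m => f (m + 1)) (x := W)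
  rw [hW] at hpow
  rw [← hpow]
  refine sum_nbij' (fun S => S.erase 1) (insert 1) (fun S hS => ?_) (fun S hS => ?_)
    (fun S hS => ?_) (fun S hS => ?_) (fun S hS => ?_)
  · refine mem_powerset.2 (erase_subset_erase 1 fun x hx => mem_erase.2 ⟨?_, mem_univ x⟩)
    exact fun h => (mem_filter.1 hS).2.1 (h ▸ hx)
  · refine mem_filter.2 ⟨mem_univ _, fun h => ?_, mem_insert_self _ _⟩
    rcases mem_insert.1 h with h | h
    · exact zero_ne_one h
    · simpa [W] using mem_powerset.1 hS h
  · exact insert_erase (mem_filter.1 hS).2.2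
  · exact erase_insert fun h => h1W (mem_powerset.1 hS h)
  · rw [card_erase_add_one (mem_filter.1 hS).2.2]

namespace PTree

/-- The number of non-root vertices. -/
def size : PTree → ℕ
  | .node l => ∑ i : Fin l.length, (size (l.get i) + 1)
decreasing_by
  simp_wf; have := List.sizeOf_lt_of_mem (l.getElem_mem i.isLt)
  simp; omega

lemma size_eq_zero_iff {t : PTree} : t.size = 0 ↔ t = node [] := by
  obtain ⟨_ | ⟨c, l⟩⟩ := t
  · simp [size]
  · rw [size, Finset.sum_eq_zero_iff]
    simp

def equivSigmaFin : ((k : ℕ) × (Fin k → PTree)) ≃ PTree :=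
  List.equivSigmaTuple.symm.trans ⟨node, fun ⟨l⟩ => l, fun _ => rfl, fun ⟨_⟩ => rfl⟩

@[simp]
lemma equivSigmaFin_apply {k : ℕ} (v : Fin k → PTree) :
    equivSigmaFin ⟨k, v⟩ = node (List.ofFn v) := rfl

lemma size_node_ofFn {k : ℕ} (v : Fin k → PTree) :
    size (node (List.ofFn v)) = ∑ i, (size (v i) + 1) := by
  rw [size]
  exact Fintype.sum_equiv (finCongr List.length_ofFn) _ _ fun i => by simp [Fin.cast]

end PTree

section Planar

variable {P : Type*} (F : P → P → ℝ≥0∞) (r : P → ℝ≥0∞)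

def branchWeight (γ : P) (t : PTree) : ℝ≥0∞ := ∑' γ', F γ γ' * r γ' * treeW2 F r t γ'

def planarSum (n : ℕ) (γ : P) : ℝ≥0∞ :=
  ∑' t : PTree, if t.size = n then treeW2 F r t γ else 0

def planarBranchSum (n : ℕ) (γ : P) : ℝ≥0∞ := ∑' γ', F γ γ' * r γ' * planarSum F r n γ'

/-- Ordered forests of `k` trees with `n` vertices in total, roots hanging from `γ`. -/
def forestWeight (n k : ℕ) (γ : P) : ℝ≥0∞ :=
  ∑' v : Fin k → PTree,
    if ∑ i, ((v i).size + 1) = n then ∏ i, branchWeight F r γ (v i) else 0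

lemma treeW2_node_ofFn {k : ℕ} (v : Fin k → PTree) (γ : P) :
    treeW2 F r (.node (List.ofFn v)) γ = (k ! : ℝ≥0∞)⁻¹ * ∏ i, branchWeight F r γ (v i) := by
  rw [treeW2]
  congr 1
  · rw [List.length_ofFn]
  exact Fintype.prod_equiv (finCongr List.length_ofFn) _ _ fun i => by
    simp [branchWeight, Fin.cast]

lemma planarSum_eq_tsum_forestWeight (n : ℕ) (γ : P) :
    planarSum F r n γ = ∑' k, (k ! : ℝ≥0∞)⁻¹ * forestWeight F r n k γ := by
  rw [planarSum, ← PTree.equivSigmaFin.tsum_eq, ENNReal.tsum_sigma']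
  refine tsum_congr fun k => ?_
  rw [forestWeight, ← ENNReal.tsum_mul_left]
  refine tsum_congr fun v => ?_
  rw [PTree.equivSigmaFin_apply, PTree.size_node_ofFn, treeW2_node_ofFn, mul_ite, mul_zero]

lemma planarSum_zero (γ : P) : planarSum F r 0 γ = 1 := by
  rw [planarSum, tsum_eq_single (PTree.node [])]
  · simp [PTree.size, treeW2]
  · intro t ht
    rw [if_neg (mt PTree.size_eq_zero_iff.1 ht)]

lemma forestWeight_succ_zero (n : ℕ) (γ : P) : forestWeight F r (n + 1) 0 γ = 0 := by
  simp [forestWeight]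

lemma tsum_ite_size_eq_branchWeight (b : ℕ) (γ : P) :
    ∑' t : PTree, (if t.size = b then branchWeight F r γ t else 0) = planarBranchSum F r b γ := by
  simp_rw [planarBranchSum, planarSum, branchWeight, ← ENNReal.tsum_mul_left]
  rw [ENNReal.tsum_comm]
  refine tsum_congr fun t => ?_
  split_ifs <;> simp

/-- Splitting off the `j`-th tree of a forest. -/
lemma tsum_size_mul_prod_branchWeight (n k : ℕ) (j : Fin (k + 1)) (γ : P) :
    ∑' v : Fin (k + 1) → PTree,
      (if ∑ i, ((v i).size + 1) = n + 1
        then ((v j).size + 1 : ℝ≥0∞) * ∏ i, branchWeight F r γ (v i) else 0)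
      = ∑ b ∈ range (n + 1),
          (b + 1 : ℝ≥0∞) * planarBranchSum F r b γ * forestWeight F r (n - b) k γ := by
  rw [← (Fin.insertNthEquiv (fun _ => PTree) j).tsum_eq, ENNReal.tsum_prod']
  simp only [Fin.insertNthEquiv, Equiv.coe_fn_mk, Fin.sum_univ_succAbove _ j,
    Fin.prod_univ_succAbove _ j, Fin.insertNth_apply_same, Fin.insertNth_apply_succAbove]
  simp only [show ∀ a b : ℕ, a + 1 + b = n + 1 ↔ a + b = n from fun a b => by omega,
    ← mul_assoc]
  rw [ENNReal.tsum_tsum_ite_add_eq]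
  refine sum_congr rfl fun b _ => ?_
  rw [forestWeight]
  congr 1
  rw [← tsum_ite_size_eq_branchWeight, ← ENNReal.tsum_mul_left]
  refine tsum_congr fun t => ?_
  split_ifs with h <;> simp [h]

lemma forestWeight_succ (n k : ℕ) (γ : P) :
    (n + 1 : ℝ≥0∞) * forestWeight F r (n + 1) (k + 1) γ
      = (k + 1) * ∑ b ∈ range (n + 1),
          (b + 1 : ℝ≥0∞) * planarBranchSum F r b γ * forestWeight F r (n - b) k γ := by
  have hsize : ∀ v : Fin (k + 1) → PTree, ∑ i, ((v i).size + 1) = n + 1 →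
      (n + 1 : ℝ≥0∞) = ∑ j, ((v j).size + 1 : ℝ≥0∞) := fun v hv => by
    exact_mod_cast hv.symm
  calc (n + 1 : ℝ≥0∞) * forestWeight F r (n + 1) (k + 1) γ
      = ∑ j : Fin (k + 1), ∑' v : Fin (k + 1) → PTree,
          (if ∑ i, ((v i).size + 1) = n + 1
            then ((v j).size + 1 : ℝ≥0∞) * ∏ i, branchWeight F r γ (v i) else 0) := by
        rw [forestWeight, ← ENNReal.tsum_mul_left,
          ← Summable.tsum_finsetSum fun (_ : Fin (k + 1)) _ => ENNReal.summable]
        refine tsum_congr fun v => ?_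
        split_ifs with hv
        · rw [hsize v hv, sum_mul]
        · simp
    _ = _ := by
        simp_rw [tsum_size_mul_prod_branchWeight]
        simp

lemma planarSum_succ (n : ℕ) (γ : P) :
    (n + 1 : ℝ≥0∞) * planarSum F r (n + 1) γ
      = ∑ b ∈ range (n + 1),
          (b + 1 : ℝ≥0∞) * planarBranchSum F r b γ * planarSum F r (n - b) γ := by
  simp_rw [planarSum_eq_tsum_forestWeight, ← ENNReal.tsum_mul_left]
  rw [tsum_eq_zero_add' ENNReal.summable, forestWeight_succ_zero, mul_zero, mul_zero, zero_add,
    ← Summable.tsum_finsetSum fun _ _ => ENNReal.summable]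
  refine tsum_congr fun k => ?_
  rw [mul_left_comm, forestWeight_succ, ← mul_assoc, ENNReal.inv_factorial_succ_mul, mul_sum]
  refine sum_congr rfl fun b _ => ?_
  ring

lemma tsum_planarSum_succ (γ : P) :
    ∑' m, planarSum F r (m + 1) γ = ∑' t : {t : PTree // t ≠ .node []}, treeW2 F r t.1 γ := by
  classical
  simp_rw [planarSum]
  rw [ENNReal.tsum_comm]
  refine (tsum_congr fun t => ?_).trans
    (_root_.tsum_subtype {t | t ≠ .node []} fun t => treeW2 F r t γ).symm
  rw [tsum_ite_eq_add_one, Set.indicator_apply]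
  simp [PTree.size_eq_zero_iff]

end Planar

/-- Trees on `{0, …, n}` rooted at `0`, as parent maps (the root is its own parent). -/
abbrev LabelledTree (n : ℕ) := {q : Fin (n + 1) → Fin (n + 1) // q 0 = 0 ∧ ∀ v, ∃ k, q^[k] v = 0}

namespace LabelledTree

instance (n : ℕ) : Fintype (LabelledTree n) := Fintype.ofFinite _

lemma iterate_zero {n : ℕ} (τ : LabelledTree n) (k : ℕ) : τ.1^[k] 0 = 0 :=
  Function.iterate_fixed τ.2.1 k

lemma iterate_eq_zero_of_le {n : ℕ} (τ : LabelledTree n) {v : Fin (n + 1)} {i j : ℕ}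
    (h : τ.1^[i] v = 0) (hij : i ≤ j) : τ.1^[j] v = 0 := by
  rw [← Nat.sub_add_cancel hij, Function.iterate_add_apply, h, iterate_zero]

variable {n : ℕ} (τ : LabelledTree (n + 1))

/-- The child of the root on the path from `1` to the root. -/
def branchRoot : Fin (n + 2) := τ.1^[Nat.find (τ.2.2 1) - 1] 1

lemma find_pos : 0 < Nat.find (τ.2.2 1) :=
  Nat.pos_of_ne_zero fun h => by simpa [h] using Nat.find_spec (τ.2.2 1)

lemma iterate_branchRoot_succ : τ.1^[Nat.find (τ.2.2 1) - 1 + 1] 1 = 0 := by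
  rw [Nat.sub_add_cancel τ.find_pos]
  exact Nat.find_spec (τ.2.2 1)

lemma branchRoot_ne_zero : τ.branchRoot ≠ 0 :=
  Nat.find_min (τ.2.2 1) (Nat.sub_one_lt_of_lt τ.find_pos)

lemma parent_branchRoot : τ.1 τ.branchRoot = 0 := by
  rw [branchRoot, ← Function.iterate_succ_apply' τ.1]
  exact τ.iterate_branchRoot_succ

lemma eq_branchRoot_of_parent_eq_zero {u : Fin (n + 2)} (hu : ∃ k, τ.1^[k] 1 = u)
    (hu0 : u ≠ 0) (hpu : τ.1 u = 0) : u = τ.branchRoot := by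
  obtain ⟨k, rfl⟩ := hu
  have hk : τ.1^[k + 1] 1 = 0 := by rwa [Function.iterate_succ_apply']
  have : k = Nat.find (τ.2.2 1) - 1 :=
    le_antisymm (not_lt.1 fun h => hu0 (τ.iterate_eq_zero_of_le τ.iterate_branchRoot_succ h))
      (not_lt.1 fun h => τ.branchRoot_ne_zero (τ.iterate_eq_zero_of_le hk h))
  rw [this, branchRoot]

def branch : Finset (Fin (n + 2)) := open Classical in {u | ∃ k, τ.1^[k] u = τ.branchRoot}

variable {τ}

lemma mem_branch {u : Fin (n + 2)} : u ∈ τ.branch ↔ ∃ k, τ.1^[k] u = τ.branchRoot := by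
  simp [branch]

variable (τ)

lemma zero_notMem_branch : 0 ∉ τ.branch := fun h => by
  obtain ⟨k, hk⟩ := mem_branch.1 h
  exact τ.branchRoot_ne_zero (hk.symm.trans (τ.iterate_zero k))

lemma one_mem_branch : 1 ∈ τ.branch := mem_branch.2 ⟨_, rfl⟩

lemma branchRoot_mem_branch : τ.branchRoot ∈ τ.branch := mem_branch.2 ⟨0, rfl⟩

variable {τ}

lemma parent_mem_branch {u : Fin (n + 2)} (hu : u ∈ τ.branch) (hne : u ≠ τ.branchRoot) :
    τ.1 u ∈ τ.branch := by
  obtain ⟨k, hk⟩ := mem_branch.1 hu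
  cases k with
  | zero => exact absurd hk hne
  | succ k => exact mem_branch.2 ⟨k, by rwa [← Function.iterate_succ_apply]⟩

lemma parent_notMem_branch {u : Fin (n + 2)} (hu : u ∉ τ.branch) : τ.1 u ∉ τ.branch :=
  fun h => hu <| by
    obtain ⟨k, hk⟩ := mem_branch.1 h
    exact mem_branch.2 ⟨k + 1, by rwa [Function.iterate_succ_apply]⟩

end LabelledTree

/-- Identifications of a would-be branch `S` with root `c`, and of its complement, with the
vertex sets of labelled trees, matching the roots. -/
structure BranchLabelling (n j : ℕ) (S : Finset (Fin (n + 2))) (c : Fin (n + 2)) where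
  inner : Fin (j + 1) ≃ S
  outer : Fin (n - j + 1) ≃ (Sᶜ : Finset (Fin (n + 2)))
  inner_zero : (inner 0 : Fin (n + 2)) = c
  outer_zero : (outer 0 : Fin (n + 2)) = 0

namespace BranchLabelling

variable {n j : ℕ} {S : Finset (Fin (n + 2))} {c : Fin (n + 2)}

lemma zero_notMem (e : BranchLabelling n j S c) : (0 : Fin (n + 2)) ∉ S :=
  mem_compl.1 (e.outer_zero ▸ (e.outer 0).2)

lemma index_le (e : BranchLabelling n j S c) : j ≤ n := by
  have h1 := Fintype.card_congr e.inner
  have h2 := Fintype.card_congr e.outer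
  simp only [Fintype.card_fin, Fintype.card_coe, card_compl] at h1 h2
  omega

lemma root_mem (e : BranchLabelling n j S c) : c ∈ S :=
  e.inner_zero ▸ (e.inner 0).2

variable (e : BranchLabelling n j S c)

lemma inner_symm_eq_zero_iff {u : Fin (n + 2)} (hu : u ∈ S) :
    e.inner.symm ⟨u, hu⟩ = 0 ↔ u = c := by
  rw [Equiv.symm_apply_eq, Subtype.ext_iff, e.inner_zero]

lemma inner_eq_root_iff {w : Fin (j + 1)} : (e.inner w : Fin (n + 2)) = c ↔ w = 0 := by
  rw [← e.inner.apply_eq_iff_eq, Subtype.ext_iff, e.inner_zero]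

lemma outer_eq_zero_iff {w : Fin (n - j + 1)} : (e.outer w : Fin (n + 2)) = 0 ↔ w = 0 := by
  rw [← e.outer.apply_eq_iff_eq, Subtype.ext_iff, e.outer_zero]

lemma inner_ne_zero (w : Fin (j + 1)) : (e.inner w : Fin (n + 2)) ≠ 0 :=
  fun h => e.zero_notMem (h ▸ (e.inner w).2)

lemma outer_succ_ne_zero (w : Fin (n - j)) : (e.outer w.succ : Fin (n + 2)) ≠ 0 := by
  rw [← e.outer_zero, Ne, ← Subtype.ext_iff, e.outer.apply_eq_iff_eq]
  exact Fin.succ_ne_zero w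

variable (tin : LabelledTree j) (tout : LabelledTree (n - j))

/-- Hang the tree `tin`, transported to `S`, from the root of the tree `tout` transported to
`Sᶜ`. -/
def graftParent (u : Fin (n + 2)) : Fin (n + 2) :=
  if hu : u ∈ S then
    if e.inner.symm ⟨u, hu⟩ = 0 then 0 else e.inner (tin.1 (e.inner.symm ⟨u, hu⟩))
  else e.outer (tout.1 (e.outer.symm ⟨u, mem_compl.2 hu⟩))

lemma graftParent_inner {w : Fin (j + 1)} (hw : w ≠ 0) :
    e.graftParent tin tout (e.inner w) = e.inner (tin.1 w) := by
  simp [graftParent, hw]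

lemma graftParent_root : e.graftParent tin tout c = 0 := by
  simp [graftParent, e.root_mem, (e.inner_symm_eq_zero_iff e.root_mem).2 rfl]

lemma graftParent_outer (w : Fin (n - j + 1)) :
    e.graftParent tin tout (e.outer w) = e.outer (tout.1 w) := by
  simp [graftParent, mem_compl.1 (e.outer w).2]

lemma exists_iterate_graftParent_inner (w : Fin (j + 1)) :
    ∃ k, (e.graftParent tin tout)^[k] (e.inner w) = c := by
  obtain ⟨m, hm⟩ := tin.2.2 w
  induction m generalizing w with
  | zero => exact ⟨0, by simp_all [e.inner_zero]⟩
  | succ m ih =>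
    by_cases hw : w = 0
    · exact ⟨0, by simp [hw, e.inner_zero]⟩
    obtain ⟨k, hk⟩ := ih (tin.1 w) (by rwa [← Function.iterate_succ_apply])
    exact ⟨k + 1, by rwa [Function.iterate_succ_apply, e.graftParent_inner tin tout hw]⟩

lemma semiconj_graftParent_outer :
    Function.Semiconj (fun w => (e.outer w : Fin (n + 2))) tout.1 (e.graftParent tin tout) :=
  fun w => (e.graftParent_outer tin tout w).symm

def graft : LabelledTree (n + 1) :=
  ⟨e.graftParent tin tout,
    by simpa [e.outer_zero, tout.2.1] using e.graftParent_outer tin tout 0, fun u => by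
    by_cases hu : u ∈ S
    · obtain ⟨k, hk⟩ := e.exists_iterate_graftParent_inner tin tout (e.inner.symm ⟨u, hu⟩)
      refine ⟨k + 1, ?_⟩
      rw [Equiv.apply_symm_apply] at hk
      rw [Function.iterate_succ_apply', hk, graftParent_root]
    · obtain ⟨m, hm⟩ := tout.2.2 (e.outer.symm ⟨u, mem_compl.2 hu⟩)
      refine ⟨m, ?_⟩
      have h := (e.semiconj_graftParent_outer tin tout).iterate_right m
        (e.outer.symm ⟨u, mem_compl.2 hu⟩)
      rwa [Equiv.apply_symm_apply, hm, e.outer_zero, eq_comm] at h⟩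

lemma coe_graft : (e.graft tin tout).1 = e.graftParent tin tout := rfl

lemma branchRoot_graft (h1 : 1 ∈ S) : (e.graft tin tout).branchRoot = c := by
  refine (LabelledTree.eq_branchRoot_of_parent_eq_zero _ ?_ ?_ (e.graftParent_root tin tout)).symm
  · simpa [coe_graft] using e.exists_iterate_graftParent_inner tin tout (e.inner.symm ⟨1, h1⟩)
  · exact e.inner_zero ▸ e.inner_ne_zero 0

lemma branch_graft (h1 : 1 ∈ S) : (e.graft tin tout).branch = S := by
  ext u
  rw [LabelledTree.mem_branch, e.branchRoot_graft tin tout h1]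
  refine ⟨fun ⟨k, hk⟩ => by_contra fun hu => ?_, fun hu => ?_⟩
  · have h := (e.semiconj_graftParent_outer tin tout).iterate_right k
      (e.outer.symm ⟨u, mem_compl.2 hu⟩)
    rw [Equiv.apply_symm_apply, ← coe_graft, hk] at h
    exact mem_compl.1 (h ▸ (e.outer _).2) e.root_mem
  · simpa [coe_graft] using e.exists_iterate_graftParent_inner tin tout (e.inner.symm ⟨u, hu⟩)

end BranchLabelling

namespace BranchLabelling

variable {n j : ℕ} {S : Finset (Fin (n + 2))} {c : Fin (n + 2)} (e : BranchLabelling n j S c)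
  (τ : LabelledTree (n + 1))

def innerParent (w : Fin (j + 1)) : Fin (j + 1) :=
  if w = 0 then 0 else if h : τ.1 (e.inner w) ∈ S then e.inner.symm ⟨_, h⟩ else 0

def outerParent (w : Fin (n - j + 1)) : Fin (n - j + 1) :=
  if h : τ.1 (e.outer w) ∈ Sᶜ then e.outer.symm ⟨_, h⟩ else 0

variable {τ}

lemma parent_inner_mem (hS : τ.branch = S) (hc : τ.branchRoot = c) {w : Fin (j + 1)}
    (hw : w ≠ 0) : τ.1 (e.inner w) ∈ S := by
  have h := LabelledTree.parent_mem_branch (τ := τ) (u := e.inner w)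
    (by rw [hS]; exact (e.inner w).2) (by rw [hc]; exact mt e.inner_eq_root_iff.1 hw)
  rwa [hS] at h

lemma parent_outer_mem (hS : τ.branch = S) (w : Fin (n - j + 1)) : τ.1 (e.outer w) ∈ Sᶜ := by
  have h := LabelledTree.parent_notMem_branch (τ := τ) (u := e.outer w)
    (by rw [hS]; exact mem_compl.1 (e.outer w).2)
  rwa [hS, ← mem_compl] at h

lemma inner_innerParent (hS : τ.branch = S) (hc : τ.branchRoot = c) {w : Fin (j + 1)}
    (hw : w ≠ 0) : (e.inner (e.innerParent τ w) : Fin (n + 2)) = τ.1 (e.inner w) := by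
  simp [innerParent, hw, e.parent_inner_mem hS hc hw]

lemma semiconj_outerParent (hS : τ.branch = S) :
    Function.Semiconj (fun w => (e.outer w : Fin (n + 2))) (e.outerParent τ) τ.1 := fun w => by
  simp [outerParent, e.parent_outer_mem hS w]

lemma exists_iterate_innerParent (hS : τ.branch = S) (hc : τ.branchRoot = c) (m : ℕ)
    (w : Fin (j + 1)) (hm : τ.1^[m] (e.inner w) = c) : ∃ k, (e.innerParent τ)^[k] w = 0 := by
  induction m generalizing w with
  | zero => exact ⟨0, e.inner_eq_root_iff.1 hm⟩
  | succ m ih =>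
    by_cases hw : w = 0
    · exact ⟨0, hw⟩
    rw [Function.iterate_succ_apply, ← e.inner_innerParent hS hc hw] at hm
    obtain ⟨k, hk⟩ := ih _ hm
    exact ⟨k + 1, hk⟩

def innerTree (hS : τ.branch = S) (hc : τ.branchRoot = c) : LabelledTree j :=
  ⟨e.innerParent τ, by simp [innerParent], fun w => by
    obtain ⟨m, hm⟩ := LabelledTree.mem_branch.1 (by rw [hS]; exact (e.inner w).2)
    exact e.exists_iterate_innerParent hS hc m w (hm.trans hc)⟩

def outerTree (hS : τ.branch = S) : LabelledTree (n - j) :=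
  ⟨e.outerParent τ,
    e.outer_eq_zero_iff.1 ((e.semiconj_outerParent hS 0).trans (by simp [e.outer_zero, τ.2.1])),
    fun w => by
    obtain ⟨m, hm⟩ := τ.2.2 (e.outer w)
    refine ⟨m, ?_⟩
    have h := (e.semiconj_outerParent hS).iterate_right m w
    rw [hm, ← e.outer_zero] at h
    exact e.outer.injective (Subtype.ext h)⟩

lemma graft_innerTree_outerTree (hS : τ.branch = S) (hc : τ.branchRoot = c) :
    e.graft (e.innerTree hS hc) (e.outerTree hS) = τ := by
  refine Subtype.ext (funext fun u => ?_)
  rw [coe_graft]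
  by_cases hu : u ∈ S
  · obtain ⟨w, rfl⟩ : ∃ w, u = e.inner w := ⟨e.inner.symm ⟨u, hu⟩, by simp⟩
    by_cases hw : w = 0
    · rw [hw, e.inner_zero, graftParent_root, ← hc, τ.parent_branchRoot]
    · rw [graftParent_inner _ _ _ hw]
      exact e.inner_innerParent hS hc hw
  · obtain ⟨w, rfl⟩ : ∃ w, u = e.outer w := ⟨e.outer.symm ⟨u, mem_compl.2 hu⟩, by simp⟩
    rw [graftParent_outer]
    exact e.semiconj_outerParent hS w

variable (tin : LabelledTree j) (tout : LabelledTree (n - j))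

lemma innerParent_graft : e.innerParent (e.graft tin tout) = tin.1 := by
  funext w
  by_cases hw : w = 0
  · simp [innerParent, hw, tin.2.1]
  · simp [innerParent, hw, coe_graft, graftParent_inner]

lemma outerParent_graft : e.outerParent (e.graft tin tout) = tout.1 := by
  funext w
  simp [outerParent, coe_graft, graftParent_outer]

/-- Cutting a tree along its branch through `1` and grafting are mutually inverse. -/
def fiberEquiv (h1 : 1 ∈ S) :
    {τ : LabelledTree (n + 1) // τ.branch = S ∧ τ.branchRoot = c}
      ≃ LabelledTree j × LabelledTree (n - j) where
  toFun τ := (e.innerTree τ.2.1 τ.2.2, e.outerTree τ.2.1)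
  invFun p := ⟨e.graft p.1 p.2, e.branch_graft p.1 p.2 h1, e.branchRoot_graft p.1 p.2 h1⟩
  left_inv τ := Subtype.ext (e.graft_innerTree_outerTree τ.2.1 τ.2.2)
  right_inv p := Prod.ext (Subtype.ext (e.innerParent_graft p.1 p.2))
    (Subtype.ext (e.outerParent_graft p.1 p.2))

end BranchLabelling

lemma BranchLabelling.nonempty {n j : ℕ} {S : Finset (Fin (n + 2))} {c : Fin (n + 2)}
    (h0 : 0 ∉ S) (hc : c ∈ S) (hS : S.card = j + 1) : Nonempty (BranchLabelling n j S c) := by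
  have hSc : Sᶜ.card = n - j + 1 := by
    have := card_pos.2 ⟨0, mem_compl.2 h0⟩
    rw [card_compl, Fintype.card_fin] at *
    omega
  obtain ⟨inner, hinner⟩ := Finset.exists_equiv_fin_apply_zero hS hc
  obtain ⟨outer, houter⟩ := Finset.exists_equiv_fin_apply_zero hSc (mem_compl.2 h0)
  exact ⟨⟨inner, outer, hinner, houter⟩⟩

section LabelledWeight

variable {P : Type*} (F : P → P → ℝ≥0∞) (r : P → ℝ≥0∞)

def edgeWeight {n : ℕ} (τ : LabelledTree n) (G : Fin (n + 1) → P) : ℝ≥0∞ :=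
  ∏ v : Fin n, F (G (τ.1 v.succ)) (G v.succ) * r (G v.succ)

def labelledWeight (γ : P) {n : ℕ} (τ : LabelledTree n) : ℝ≥0∞ :=
  ∑' g : Fin n → P, edgeWeight F r τ (Fin.cons γ g)

def labelledSum (n : ℕ) (γ : P) : ℝ≥0∞ := ∑' τ : LabelledTree n, labelledWeight F r γ τ

def labelledBranchSum (n : ℕ) (γ : P) : ℝ≥0∞ := ∑' γ', F γ γ' * r γ' * labelledSum F r n γ'

lemma labelledSum_zero (γ : P) : labelledSum F r 0 γ = 1 := by
  have : Unique (LabelledTree 0) :=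
    { default := ⟨fun _ => 0, rfl, fun v => ⟨0, Fin.fin_one_eq_zero v⟩⟩
      uniq := fun _ => Subtype.ext (funext fun v => Fin.fin_one_eq_zero _) }
  simp [labelledSum, labelledWeight, edgeWeight]

namespace BranchLabelling

variable {n j : ℕ} {S : Finset (Fin (n + 2))} {c : Fin (n + 2)} (e : BranchLabelling n j S c)

def vertexMap : Fin (j + 1) ⊕ Fin (n - j) → Fin (n + 1) :=
  Sum.elim (fun w => (e.inner w : Fin (n + 2)).pred (e.inner_ne_zero w))
    (fun w => (e.outer w.succ : Fin (n + 2)).pred (e.outer_succ_ne_zero w))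

lemma vertexMap_injective : Function.Injective e.vertexMap := by
  rintro (a | a) (b | b) h <;> simp only [vertexMap, Sum.elim_inl, Sum.elim_inr, Fin.pred_inj] at h
  · exact congrArg _ (e.inner.injective (Subtype.ext h))
  · exact absurd (h ▸ (e.inner a).2) (mem_compl.1 (e.outer b.succ).2)
  · exact absurd (h ▸ (e.inner b).2) (mem_compl.1 (e.outer a.succ).2)
  · exact congrArg _ (Fin.succ_injective _ (e.outer.injective (Subtype.ext h)))

def vertexEquiv : Fin (j + 1) ⊕ Fin (n - j) ≃ Fin (n + 1) :=
  Equiv.ofBijective e.vertexMap ((Fintype.bijective_iff_injective_and_card _).2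
    ⟨e.vertexMap_injective, by
      simp only [Fintype.card_sum, Fintype.card_fin]
      have := e.index_le
      omega⟩)

@[simp]
lemma succ_vertexEquiv_inl (w : Fin (j + 1)) : (e.vertexEquiv (.inl w)).succ = e.inner w := by
  simp [vertexEquiv, vertexMap]

@[simp]
lemma succ_vertexEquiv_inr (w : Fin (n - j)) :
    (e.vertexEquiv (.inr w)).succ = e.outer w.succ := by
  simp [vertexEquiv, vertexMap]

variable (tin : LabelledTree j) (tout : LabelledTree (n - j))

lemma edgeWeight_graft (G : Fin (n + 2) → P) :
    edgeWeight F r (e.graft tin tout) G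
      = F (G 0) (G c) * r (G c) * edgeWeight F r tin (fun w => G (e.inner w))
          * edgeWeight F r tout (fun w => G (e.outer w)) := by
  rw [edgeWeight, ← e.vertexEquiv.prod_comp, Fintype.prod_sum_type, Fin.prod_univ_succ]
  simp only [succ_vertexEquiv_inl, succ_vertexEquiv_inr, coe_graft, e.inner_zero,
    graftParent_root, edgeWeight, graftParent_inner _ _ _ (Fin.succ_ne_zero _), graftParent_outer]

def labellingEquiv : (Fin (j + 1) → P) × (Fin (n - j) → P) ≃ (Fin (n + 1) → P) :=
  (Equiv.sumArrowEquivProdArrow _ _ _).symm.trans (e.vertexEquiv.arrowCongr (Equiv.refl P))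

lemma labellingEquiv_vertexEquiv (p : (Fin (j + 1) → P) × (Fin (n - j) → P))
    (x : Fin (j + 1) ⊕ Fin (n - j)) :
    e.labellingEquiv p (e.vertexEquiv x) = Sum.elim p.1 p.2 x := by
  simp only [labellingEquiv, Equiv.trans_apply, Equiv.arrowCongr_apply, Function.comp_apply,
    Equiv.symm_apply_apply, Equiv.refl_apply]
  cases x <;> rfl

lemma cons_labellingEquiv_inner (γ : P) (p : (Fin (j + 1) → P) × (Fin (n - j) → P)) :
    (fun w => (Fin.cons γ (e.labellingEquiv p) : Fin (n + 2) → P) (e.inner w)) = p.1 := by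
  funext w
  rw [← succ_vertexEquiv_inl, Fin.cons_succ, labellingEquiv_vertexEquiv, Sum.elim_inl]

lemma cons_labellingEquiv_root (γ : P) (p : (Fin (j + 1) → P) × (Fin (n - j) → P)) :
    (Fin.cons γ (e.labellingEquiv p) : Fin (n + 2) → P) c = p.1 0 :=
  (congrArg _ e.inner_zero.symm).trans (congrFun (e.cons_labellingEquiv_inner γ p) 0)

lemma cons_labellingEquiv_outer (γ : P) (p : (Fin (j + 1) → P) × (Fin (n - j) → P)) :
    (fun w => (Fin.cons γ (e.labellingEquiv p) : Fin (n + 2) → P) (e.outer w))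
      = (Fin.cons γ p.2 : Fin (n - j + 1) → P) := by
  funext w
  induction w using Fin.cases with
  | zero => simp [e.outer_zero]
  | succ w =>
    rw [← succ_vertexEquiv_inr, Fin.cons_succ, labellingEquiv_vertexEquiv, Sum.elim_inr,
      Fin.cons_succ]

lemma labelledWeight_graft (γ : P) :
    labelledWeight F r γ (e.graft tin tout)
      = (∑' γc, F γ γc * r γc * labelledWeight F r γc tin) * labelledWeight F r γ tout := by
  rw [labelledWeight, ← e.labellingEquiv.tsum_eq, ENNReal.tsum_prod']
  simp only [edgeWeight_graft, cons_labellingEquiv_inner, cons_labellingEquiv_outer, Fin.cons_zero,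
    cons_labellingEquiv_root]
  simp_rw [ENNReal.tsum_mul_left]
  rw [ENNReal.tsum_mul_right, ← (Fin.consEquiv fun _ => P).tsum_eq, ENNReal.tsum_prod']
  congr 1
  refine tsum_congr fun γc => ?_
  simp [Fin.consEquiv, labelledWeight, ENNReal.tsum_mul_left]

end BranchLabelling

lemma sum_labelledWeight_branch_eq {n j : ℕ} (γ : P) {S : Finset (Fin (n + 2))}
    {c : Fin (n + 2)} (h0 : 0 ∉ S) (h1 : 1 ∈ S) (hc : c ∈ S) (hS : S.card = j + 1) :
    ∑ τ ∈ univ.filter (fun τ : LabelledTree (n + 1) => τ.branch = S ∧ τ.branchRoot = c),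
        labelledWeight F r γ τ
      = labelledBranchSum F r j γ * labelledSum F r (n - j) γ := by
  obtain ⟨e⟩ := BranchLabelling.nonempty h0 hc hS
  rw [sum_subtype _ (p := fun τ : LabelledTree (n + 1) => τ.branch = S ∧ τ.branchRoot = c)
    (fun _ => by simp), ← (e.fiberEquiv h1).symm.sum_comp, Fintype.sum_prod_type]
  simp only [BranchLabelling.fiberEquiv, Equiv.coe_fn_symm_mk, e.labelledWeight_graft, ← mul_sum,
    ← sum_mul]
  simp only [labelledBranchSum, labelledSum, tsum_fintype, mul_sum]
  rw [← Summable.tsum_finsetSum fun _ _ => ENNReal.summable]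

lemma sum_labelledWeight_fiber (n : ℕ) (γ : P) (S : Finset (Fin (n + 2))) (c : Fin (n + 2)) :
    ∑ τ ∈ univ.filter (fun τ : LabelledTree (n + 1) => (τ.branch, τ.branchRoot) = (S, c)),
        labelledWeight F r γ τ
      = if c ∈ S then
          if 0 ∉ S ∧ 1 ∈ S then
            labelledBranchSum F r (S.card - 1) γ * labelledSum F r (n - (S.card - 1)) γ
          else 0
        else 0 := by
  simp only [Prod.mk.injEq]
  by_cases h : c ∈ S ∧ 0 ∉ S ∧ 1 ∈ S
  · rw [if_pos h.1, if_pos h.2]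
    exact sum_labelledWeight_branch_eq F r γ h.2.1 h.2.2 h.1
      (Nat.succ_pred_eq_of_pos (card_pos.2 ⟨1, h.2.2⟩)).symm
  · rw [← ite_and, if_neg h]
    refine sum_eq_zero fun τ hτ => absurd ?_ h
    obtain ⟨rfl, rfl⟩ := (mem_filter.1 hτ).2
    exact ⟨τ.branchRoot_mem_branch, τ.zero_notMem_branch, τ.one_mem_branch⟩

lemma labelledSum_succ (n : ℕ) (γ : P) :
    labelledSum F r (n + 1) γ
      = ∑ j ∈ range (n + 1), n.choose j *
          ((j + 1) * (labelledBranchSum F r j γ * labelledSum F r (n - j) γ)) := by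
  rw [labelledSum, tsum_fintype, ← sum_fiberwise univ (fun τ => (τ.branch, τ.branchRoot)),
    Fintype.sum_prod_type]
  simp only [sum_labelledWeight_fiber, Fintype.sum_ite_mem, sum_const, smul_ite, smul_zero]
  rw [← sum_filter, sum_card_filter_zero_notMem_one_mem n
    fun m => m • (labelledBranchSum F r (m - 1) γ * labelledSum F r (n - (m - 1)) γ)]
  simp [nsmul_eq_mul]

theorem labelledSum_eq_factorial_mul_planarSum (n : ℕ) (γ : P) :
    labelledSum F r n γ = n ! * planarSum F r n γ := by
  induction n using Nat.strong_induction_on generalizing γ with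
  | _ n ih =>
  rcases n with _ | n
  · simp [labelledSum_zero, planarSum_zero]
  have hbranch (j : ℕ) (hj : j < n + 1) :
      labelledBranchSum F r j γ = j ! * planarBranchSum F r j γ := by
    simp_rw [labelledBranchSum, planarBranchSum, ih j hj, ← ENNReal.tsum_mul_left]
    exact tsum_congr fun _ => by ring
  calc labelledSum F r (n + 1) γ
      = ∑ j ∈ range (n + 1),
          n ! * ((j + 1) * planarBranchSum F r j γ * planarSum F r (n - j) γ) := by
        rw [labelledSum_succ]
        refine sum_congr rfl fun j hj => ?_
        have hjn : j ≤ n := Nat.lt_succ_iff.1 (mem_range.1 hj)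
        rw [hbranch j (mem_range.1 hj), ih (n - j) (by omega),
          ← Nat.choose_mul_factorial_mul_factorial hjn]
        push_cast
        ring
    _ = (n + 1)! * planarSum F r (n + 1) γ := by
        rw [← mul_sum, ← planarSum_succ, Nat.factorial_succ]
        push_cast
        ring

end LabelledWeight

theorem stmt17_general {P : Type*} (F : P → P → ℝ≥0∞) (ρ : P → ℝ≥0) (γ₀ : P) :
    (∑' m : ℕ, (((m + 1).factorial : ℝ≥0∞))⁻¹ *
        ∑' τ : {q : Fin (m + 2) → Fin (m + 2) //
            q 0 = 0 ∧ ∀ v, ∃ k, q^[k] v = 0},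
          ∑' g : Fin (m + 1) → P,
            ∏ v : Fin (m + 1),
              F ((Fin.cons γ₀ g : Fin (m + 2) → P) (τ.1 v.succ))
                  ((Fin.cons γ₀ g : Fin (m + 2) → P) v.succ) *
                (ρ (g v) : ℝ≥0∞))
      = ∑' t : {t : PTree // t ≠ PTree.node []},
          treeW2 F (fun γ => (ρ γ : ℝ≥0∞)) t.1 γ₀ := by
  set r : P → ℝ≥0∞ := fun γ => ρ γ
  change ∑' m : ℕ, ((m + 1).factorial : ℝ≥0∞)⁻¹ * labelledSum F r (m + 1) γ₀ = _
  simp_rw [labelledSum_eq_factorial_mul_planarSum,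
    ENNReal.inv_mul_cancel_left (Nat.cast_ne_zero.2 (Nat.factorial_ne_zero _))
      (ENNReal.natCast_ne_top _)]
  exact tsum_planarSum_succ F r γ₀

/-- the sum over labelled rooted trees on `{0,1,…,n}` (encoded by parent
maps, rooted at `0`, with `γ₀` pinned at the root) reorganizes into the sum over planar
rooted trees (other than the root-only tree) of the corresponding weights. -/
theorem stmt17 {P : Type*} [Countable P]
    (F : P → P → ℝ≥0∞) (hFsym : ∀ a b, F a b = F b a)
    (ρ : P → ℝ≥0) (γ₀ : P) :
    (∑' m : ℕ, (((m + 1).factorial : ℝ≥0∞))⁻¹ *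
        ∑' τ : {q : Fin (m + 2) → Fin (m + 2) //
            q 0 = 0 ∧ ∀ v, ∃ k, q^[k] v = 0},
          ∑' g : Fin (m + 1) → P,
            ∏ v : Fin (m + 1),
              F ((Fin.cons γ₀ g : Fin (m + 2) → P) (τ.1 v.succ))
                  ((Fin.cons γ₀ g : Fin (m + 2) → P) v.succ) *
                (ρ (g v) : ℝ≥0∞))
      = ∑' t : {t : PTree // t ≠ PTree.node []},
          treeW2 F (fun γ => (ρ γ : ℝ≥0∞)) t.1 γ₀ :=
  stmt17_general F ρ γ₀
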